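/- Let a, ν, ν₀ be positive integers with a ≤ ν/2 and ν₀ ≤ ν. Let B₁, …, B_ν be independent Bernoulli random variables each equal to 1 with probability a/ν. For each 1 ≤ i ≤ ν, let s_i : {0,1}^{i−1} → {0,1} be an arbitrary function, and set H_i = s_i(B₁, …, B_{i−1}). Let h = Σ_{i=1}^{ν} H_i and h_A = Σ_{i=1}^{ν} H_i·B_i. Then for all real t with 0 < t < a/ν, P[(h ≥ ν₀) and |h_A − (a/ν)·h| ≥ t·h] ≤ (40/t²)·exp(−ν₀·ν·t²/(20·a)). -/

import Mathlib

open MeasureTheory ProbabilityTheory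

/-- The Bernoulli distribution on `Bool` with success probability `p`. -/
noncomputable def bernMeasure (p : ENNReal) : Measure Bool :=
  p • Measure.dirac true + (1 - p) • Measure.dirac false


open Real Finset

-- exp x ≤ 1 + x + x^2 for |x| ≤ 1
lemma exp_le_quad {x : ℝ} (hx : |x| ≤ 1) : Real.exp x ≤ 1 + x + x ^ 2 := by
  have h := Real.exp_bound hx (n := 3) (by norm_num)
  have hs : ∑ m ∈ Finset.range 3, x ^ m / m.factorial = 1 + x + x ^ 2 / 2 := by
    rw [Finset.sum_range_succ, Finset.sum_range_succ, Finset.sum_range_succ,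
      Finset.sum_range_zero]
    norm_num [Nat.factorial]
  rw [hs] at h
  have h1 := (abs_sub_le_iff.1 h).1
  have h2 : |x| ^ 3 ≤ x ^ 2 := by
    calc |x| ^ 3 ≤ |x| ^ 2 := pow_le_pow_of_le_one (abs_nonneg x) hx (by norm_num)
    _ = x ^ 2 := sq_abs x
  have : (3:ℕ).succ / ((3:ℕ).factorial * (3:ℕ) : ℝ) = 2/9 := by norm_num [Nat.factorial]
  rw [this] at h1
  nlinarith [sq_abs x, abs_nonneg x]

-- scalar MGF bound
lemma bern_mgf {p lam : ℝ} (hp0 : 0 ≤ p) (hp1 : p ≤ 1) (hlam : |lam| ≤ 1) :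
    p * Real.exp (lam * (1 - p)) + (1 - p) * Real.exp (lam * (0 - p)) ≤
      Real.exp (lam ^ 2 * p) := by
  have h1 : |lam * (1 - p)| ≤ 1 := by
    rw [abs_mul]
    calc |lam| * |1 - p| ≤ 1 * 1 := by
          apply mul_le_mul hlam _ (abs_nonneg _) zero_le_one
          rw [abs_le]; constructor <;> linarith
    _ = 1 := by ring
  have h2 : |lam * (0 - p)| ≤ 1 := by
    rw [abs_mul]
    calc |lam| * |0 - p| ≤ 1 * 1 := by
          apply mul_le_mul hlam _ (abs_nonneg _) zero_le_one
          rw [abs_le]; constructor <;> linarith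
    _ = 1 := by ring
  have e1 := exp_le_quad h1
  have e2 := exp_le_quad h2
  have e3 : 1 + lam ^ 2 * p ≤ Real.exp (lam ^ 2 * p) := by
    linarith [Real.add_one_le_exp (lam ^ 2 * p)]
  nlinarith [sq_nonneg lam, sq_nonneg (1 - p), sq_nonneg p,
    Real.exp_nonneg (lam * (1 - p)), Real.exp_nonneg (lam * (0 - p)),
    mul_nonneg hp0 (sq_nonneg lam)]

namespace CBaux

def Hb {n : ℕ} (s : (i : Fin n) → (Fin (i : ℕ) → Bool) → Bool)
    (x : Fin n → Bool) (i : Fin n) : Bool :=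
  s i (fun j => x ⟨j, j.isLt.trans i.isLt⟩)

noncomputable def w {n : ℕ} (p : ℝ) (x : Fin n → Bool) : ℝ :=
  ∏ i, (if x i then p else 1 - p)

def hsum {n : ℕ} (s : (i : Fin n) → (Fin (i : ℕ) → Bool) → Bool)
    (x : Fin n → Bool) : ℕ := ∑ i, (Hb s x i).toNat

noncomputable def M {n : ℕ} (p : ℝ) (s : (i : Fin n) → (Fin (i : ℕ) → Bool) → Bool)
    (x : Fin n → Bool) : ℝ :=
  ∑ i, (if Hb s x i then ((if x i then (1:ℝ) else 0) - p) else 0)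

lemma w_nonneg {n : ℕ} {p : ℝ} (hp0 : 0 ≤ p) (hp1 : p ≤ 1) (x : Fin n → Bool) :
    0 ≤ w p x :=
  Finset.prod_nonneg fun i _ => by split <;> linarith

-- key facts about snoc
lemma Hb_snoc {n : ℕ} (s : (i : Fin (n + 1)) → (Fin (i : ℕ) → Bool) → Bool)
    (y : Fin n → Bool) (b : Bool) (i : Fin n) :
    Hb s (Fin.snoc y b) i.castSucc = Hb (fun i : Fin n => s i.castSucc) y i := by
  unfold Hb
  congr 1
  funext j
  have : (⟨(j : ℕ), j.isLt.trans i.castSucc.isLt⟩ : Fin (n + 1)) =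
      Fin.castSucc ⟨(j : ℕ), j.isLt.trans i.isLt⟩ := rfl
  rw [this, Fin.snoc_castSucc]

lemma Hb_snoc_last {n : ℕ} (s : (i : Fin (n + 1)) → (Fin (i : ℕ) → Bool) → Bool)
    (y : Fin n → Bool) (b : Bool) :
    Hb s (Fin.snoc y b) (Fin.last n) = s (Fin.last n) (fun j => y ⟨j, j.isLt⟩) := by
  unfold Hb
  congr 1
  funext j
  have : (⟨(j : ℕ), j.isLt.trans (Fin.last n).isLt⟩ : Fin (n + 1)) =
      Fin.castSucc ⟨(j : ℕ), j.isLt⟩ := rfl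
  rw [this, Fin.snoc_castSucc]

lemma w_snoc {n : ℕ} (p : ℝ) (y : Fin n → Bool) (b : Bool) :
    w p (Fin.snoc y b) = w p y * (if b then p else 1 - p) := by
  unfold w
  rw [Fin.prod_univ_castSucc]
  congr 1
  · exact Finset.prod_congr rfl fun i _ => by rw [Fin.snoc_castSucc]
  · rw [Fin.snoc_last]

lemma hsum_snoc {n : ℕ} (s : (i : Fin (n + 1)) → (Fin (i : ℕ) → Bool) → Bool)
    (y : Fin n → Bool) (b : Bool) :
    hsum s (Fin.snoc y b) = hsum (fun i : Fin n => s i.castSucc) y +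
      (s (Fin.last n) (fun j => y ⟨j, j.isLt⟩)).toNat := by
  unfold hsum
  rw [Fin.sum_univ_castSucc]
  congr 1
  · exact Finset.sum_congr rfl fun i _ => by rw [Hb_snoc]
  · rw [Hb_snoc_last]

lemma M_snoc {n : ℕ} (p : ℝ) (s : (i : Fin (n + 1)) → (Fin (i : ℕ) → Bool) → Bool)
    (y : Fin n → Bool) (b : Bool) :
    M p s (Fin.snoc y b) = M p (fun i : Fin n => s i.castSucc) y +
      (if s (Fin.last n) (fun j => y ⟨j, j.isLt⟩) then ((if b then (1:ℝ) else 0) - p)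
        else 0) := by
  unfold M
  rw [Fin.sum_univ_castSucc]
  congr 1
  · exact Finset.sum_congr rfl fun i _ => by rw [Hb_snoc, Fin.snoc_castSucc]
  · rw [Hb_snoc_last, Fin.snoc_last]

-- the exponential supermartingale bound
lemma mgf_le_one {p lam : ℝ} (hp0 : 0 ≤ p) (hp1 : p ≤ 1) (hlam : |lam| ≤ 1) :
    ∀ (n : ℕ) (s : (i : Fin n) → (Fin (i : ℕ) → Bool) → Bool),
      ∑ x : Fin n → Bool,
        w p x * Real.exp (lam * M p s x - lam ^ 2 * p * (hsum s x : ℝ)) ≤ 1 := by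
  intro n
  induction n with
  | zero =>
      intro s
      haveI : Subsingleton (Fin 0 → Bool) := ⟨fun a b => funext fun i => i.elim0⟩
      rw [Fintype.sum_subsingleton _ (fun i : Fin 0 => false)]
      simp [M, hsum, w]
  | succ n ih =>
      intro s
      have hre : ∑ x : Fin (n + 1) → Bool,
          w p x * Real.exp (lam * M p s x - lam ^ 2 * p * (hsum s x : ℝ)) =
          ∑ yb : (Fin n → Bool) × Bool,
            w p (Fin.snoc yb.1 yb.2) *
              Real.exp (lam * M p s (Fin.snoc yb.1 yb.2) -
                lam ^ 2 * p * (hsum s (Fin.snoc yb.1 yb.2) : ℝ)) := by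
        apply Fintype.sum_equiv
          (⟨fun x => (Fin.init x, x (Fin.last n)), fun yb => Fin.snoc yb.1 yb.2,
            fun x => Fin.snoc_init_self x, fun yb => by
              simp [Fin.init_snoc, Fin.snoc_last]⟩ :
            (Fin (n + 1) → Bool) ≃ (Fin n → Bool) × Bool)
        intro x
        simp only [Equiv.coe_fn_mk, Fin.snoc_init_self]
      rw [hre, Fintype.sum_prod_type]
      have key : ∀ y : Fin n → Bool,
          (∑ b : Bool, w p (Fin.snoc y b) *
            Real.exp (lam * M p s (Fin.snoc y b) -
              lam ^ 2 * p * (hsum s (Fin.snoc y b) : ℝ))) ≤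
          w p y * Real.exp (lam * M p (fun i : Fin n => s i.castSucc) y -
            lam ^ 2 * p * (hsum (fun i : Fin n => s i.castSucc) y : ℝ)) := by
        intro y
        have hw : ∀ b, w p (Fin.snoc y b) = w p y * (if b then p else 1 - p) :=
          w_snoc p y
        have hM := M_snoc p s y
        have hh := hsum_snoc s y
        set A : ℝ := lam * M p (fun i : Fin n => s i.castSucc) y -
          lam ^ 2 * p * (hsum (fun i : Fin n => s i.castSucc) y : ℝ) with hA
        cases hC : s (Fin.last n) (fun j => y ⟨j, j.isLt⟩) with
        | false =>
            have harg : ∀ b, lam * M p s (Fin.snoc y b) -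
                lam ^ 2 * p * (hsum s (Fin.snoc y b) : ℝ) = A := by
              intro b
              rw [hM, hh, hC, hA]
              push_cast
              simp only [Bool.false_eq_true, if_false, Bool.toNat_false]
              push_cast
              ring
            rw [Fintype.sum_bool, hw, hw, harg, harg]
            have : w p y * (if true then p else 1 - p) * Real.exp A +
                w p y * (if false then p else 1 - p) * Real.exp A =
                w p y * Real.exp A := by
              simp only [if_true, Bool.false_eq_true, if_false]
              ring
            rw [this]
        | true =>
            have harg : ∀ b, lam * M p s (Fin.snoc y b) -
                lam ^ 2 * p * (hsum s (Fin.snoc y b) : ℝ) =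
                A + (lam * ((if b then (1:ℝ) else 0) - p) - lam ^ 2 * p) := by
              intro b
              rw [hM, hh, hC, hA]
              push_cast
              simp only [if_true, Bool.toNat_true]
              push_cast
              ring
            rw [Fintype.sum_bool, hw, hw, harg, harg]
            simp only [if_true, Bool.false_eq_true, if_false]
            rw [Real.exp_add, Real.exp_add]
            have hb := bern_mgf hp0 hp1 hlam
            have hwy : 0 ≤ w p y := w_nonneg hp0 hp1 y
            have hexpA : 0 ≤ Real.exp A := (Real.exp_pos A).le
            have hfac : Real.exp (lam * (1 - p) - lam ^ 2 * p) =
                Real.exp (lam * (1 - p)) * Real.exp (-(lam ^ 2 * p)) := by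
              rw [← Real.exp_add]; ring_nf
            have hfac2 : Real.exp (lam * (0 - p) - lam ^ 2 * p) =
                Real.exp (lam * (0 - p)) * Real.exp (-(lam ^ 2 * p)) := by
              rw [← Real.exp_add]; ring_nf
            have hmain : p * Real.exp (lam * (1 - p) - lam ^ 2 * p) +
                (1 - p) * Real.exp (lam * (0 - p) - lam ^ 2 * p) ≤ 1 := by
              rw [hfac, hfac2]
              have : (p * Real.exp (lam * (1 - p)) +
                  (1 - p) * Real.exp (lam * (0 - p))) * Real.exp (-(lam ^ 2 * p)) ≤
                  Real.exp (lam ^ 2 * p) * Real.exp (-(lam ^ 2 * p)) :=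
                mul_le_mul_of_nonneg_right hb (Real.exp_nonneg _)
              rw [← Real.exp_add] at this
              simp only [add_neg_cancel, Real.exp_zero] at this
              nlinarith [Real.exp_nonneg (-(lam ^ 2 * p))]
            nlinarith [mul_nonneg hwy hexpA]
      calc (∑ y : Fin n → Bool, ∑ b : Bool,
            w p (Fin.snoc y b) * Real.exp (lam * M p s (Fin.snoc y b) -
              lam ^ 2 * p * (hsum s (Fin.snoc y b) : ℝ))) ≤
          ∑ y : Fin n → Bool,
            w p y * Real.exp (lam * M p (fun i : Fin n => s i.castSucc) y -
              lam ^ 2 * p * (hsum (fun i : Fin n => s i.castSucc) y : ℝ)) :=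
            Finset.sum_le_sum fun y _ => key y
        _ ≤ 1 := ih _


open scoped Classical in
lemma chernoff (n : ℕ) (s : (i : Fin n) → (Fin (i : ℕ) → Bool) → Bool)
    {p t : ℝ} (hp0 : 0 < p) (hp1 : p ≤ 1) (ht : 0 < t) (htp : t < p) (m : ℕ) :
    ∑ x ∈ Finset.univ.filter
        (fun x : Fin n → Bool => hsum s x = m ∧ t * (m : ℝ) ≤ |M p s x|), w p x ≤
      2 * Real.exp (-(t ^ 2 * m) / (4 * p)) := by
  set lam : ℝ := t / (2 * p) with hlamdef
  have hlam0 : 0 < lam := div_pos ht (by linarith)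
  have hlam1 : lam < 1 := by
    rw [hlamdef, div_lt_one (by linarith)]
    linarith
  have h1 : |lam| ≤ 1 := by rw [abs_of_pos hlam0]; linarith
  have h2 : |(-lam)| ≤ 1 := by rwa [abs_neg]
  have A1 := mgf_le_one hp0.le hp1 h1 n s
  have A2 := mgf_le_one hp0.le hp1 h2 n s
  simp only [neg_sq, neg_mul] at A2
  set c : ℝ := lam ^ 2 * p * m - lam * t * m with hc
  have pointwise : ∀ x ∈ Finset.univ.filter
      (fun x : Fin n → Bool => hsum s x = m ∧ t * (m : ℝ) ≤ |M p s x|),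
      w p x ≤ w p x * (Real.exp c *
        (Real.exp (lam * M p s x - lam ^ 2 * p * (hsum s x : ℝ)) +
          Real.exp (-(lam * M p s x) - lam ^ 2 * p * (hsum s x : ℝ)))) := by
    intro x hx
    rw [Finset.mem_filter] at hx
    obtain ⟨-, hm, habs⟩ := hx
    have hone : (1 : ℝ) ≤ Real.exp c *
        (Real.exp (lam * M p s x - lam ^ 2 * p * (hsum s x : ℝ)) +
          Real.exp (-(lam * M p s x) - lam ^ 2 * p * (hsum s x : ℝ))) := by
      rw [hm]
      rcases le_abs.mp habs with hge | hge
      · have : (1 : ℝ) ≤ Real.exp c * Real.exp (lam * M p s x - lam ^ 2 * p * (m : ℝ)) := by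
          rw [← Real.exp_add]
          rw [show (1 : ℝ) = Real.exp 0 by simp]
          apply Real.exp_le_exp.2
          rw [hc]
          nlinarith [mul_le_mul_of_nonneg_left hge hlam0.le]
        nlinarith [Real.exp_pos c,
          Real.exp_pos (-(lam * M p s x) - lam ^ 2 * p * (m : ℝ))]
      · have : (1 : ℝ) ≤ Real.exp c * Real.exp (-(lam * M p s x) - lam ^ 2 * p * (m : ℝ)) := by
          rw [← Real.exp_add]
          rw [show (1 : ℝ) = Real.exp 0 by simp]
          apply Real.exp_le_exp.2
          rw [hc]
          nlinarith [mul_le_mul_of_nonneg_left hge hlam0.le]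
        nlinarith [Real.exp_pos c,
          Real.exp_pos (lam * M p s x - lam ^ 2 * p * (m : ℝ))]
    calc w p x = w p x * 1 := (mul_one _).symm
      _ ≤ _ := mul_le_mul_of_nonneg_left hone (w_nonneg hp0.le hp1 x)
  have step1 := Finset.sum_le_sum pointwise
  have step2 : ∑ x ∈ Finset.univ.filter
      (fun x : Fin n → Bool => hsum s x = m ∧ t * (m : ℝ) ≤ |M p s x|),
      w p x * (Real.exp c *
        (Real.exp (lam * M p s x - lam ^ 2 * p * (hsum s x : ℝ)) +
          Real.exp (-(lam * M p s x) - lam ^ 2 * p * (hsum s x : ℝ)))) ≤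
      ∑ x : Fin n → Bool, w p x * (Real.exp c *
        (Real.exp (lam * M p s x - lam ^ 2 * p * (hsum s x : ℝ)) +
          Real.exp (-(lam * M p s x) - lam ^ 2 * p * (hsum s x : ℝ)))) := by
    apply Finset.sum_le_sum_of_subset_of_nonneg (Finset.subset_univ _)
    intro x _ _
    apply mul_nonneg (w_nonneg hp0.le hp1 x)
    positivity
  have step3 : ∑ x : Fin n → Bool, w p x * (Real.exp c *
      (Real.exp (lam * M p s x - lam ^ 2 * p * (hsum s x : ℝ)) +
        Real.exp (-(lam * M p s x) - lam ^ 2 * p * (hsum s x : ℝ)))) ≤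
      Real.exp c * 2 := by
    have : ∑ x : Fin n → Bool, w p x * (Real.exp c *
        (Real.exp (lam * M p s x - lam ^ 2 * p * (hsum s x : ℝ)) +
          Real.exp (-(lam * M p s x) - lam ^ 2 * p * (hsum s x : ℝ)))) =
        Real.exp c *
          ((∑ x : Fin n → Bool,
            w p x * Real.exp (lam * M p s x - lam ^ 2 * p * (hsum s x : ℝ))) +
          (∑ x : Fin n → Bool,
            w p x * Real.exp (-(lam * M p s x) - lam ^ 2 * p * (hsum s x : ℝ)))) := by
      rw [← Finset.sum_add_distrib, Finset.mul_sum]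
      exact Finset.sum_congr rfl fun x _ => by ring
    rw [this]
    have hA2' : ∑ x : Fin n → Bool,
        w p x * Real.exp (-(lam * M p s x) - lam ^ 2 * p * (hsum s x : ℝ)) ≤ 1 := by
      exact A2
    nlinarith [Real.exp_pos c]
  have hceq : Real.exp c = Real.exp (-(t ^ 2 * m) / (4 * p)) := by
    congr 1
    rw [hc, hlamdef]
    field_simp
    ring
  calc ∑ x ∈ Finset.univ.filter
        (fun x : Fin n → Bool => hsum s x = m ∧ t * (m : ℝ) ≤ |M p s x|), w p x ≤
      Real.exp c * 2 := le_trans step1 (le_trans step2 step3)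
    _ = 2 * Real.exp (-(t ^ 2 * m) / (4 * p)) := by rw [hceq]; ring


open scoped Classical in
lemma main_sum (n ν₀ : ℕ) (s : (i : Fin n) → (Fin (i : ℕ) → Bool) → Bool)
    {p t : ℝ} (hp0 : 0 < p) (hp1 : p ≤ 1) (ht : 0 < t) (htp : t < p) :
    ∑ x ∈ Finset.univ.filter (fun x : Fin n → Bool =>
        ν₀ ≤ hsum s x ∧ t * (hsum s x : ℝ) ≤ |M p s x|), w p x ≤
      ∑ m ∈ Finset.Icc ν₀ n, 2 * Real.exp (-(t ^ 2 * m) / (4 * p)) := by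
  set F := Finset.univ.filter (fun x : Fin n → Bool =>
      ν₀ ≤ hsum s x ∧ t * (hsum s x : ℝ) ≤ |M p s x|) with hF
  have hmaps : ∀ x ∈ F, hsum s x ∈ Finset.Icc ν₀ n := by
    intro x hx
    rw [hF, Finset.mem_filter] at hx
    refine Finset.mem_Icc.2 ⟨hx.2.1, ?_⟩
    calc hsum s x = ∑ i, (Hb s x i).toNat := rfl
      _ ≤ ∑ _i : Fin n, 1 :=
          Finset.sum_le_sum fun i _ => by cases Hb s x i <;> simp
      _ = n := by simp
  rw [← Finset.sum_fiberwise_of_maps_to hmaps (w p)]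
  apply Finset.sum_le_sum
  intro m _
  calc ∑ x ∈ F.filter (fun x => hsum s x = m), w p x ≤
      ∑ x ∈ Finset.univ.filter (fun x : Fin n → Bool =>
        hsum s x = m ∧ t * (m : ℝ) ≤ |M p s x|), w p x := by
        apply Finset.sum_le_sum_of_subset_of_nonneg
        · intro x hx
          rw [hF] at hx
          simp only [Finset.mem_filter, Finset.mem_univ, true_and] at hx ⊢
          obtain ⟨⟨-, h2⟩, h3⟩ := hx
          exact ⟨h3, by rw [← h3]; exact h2⟩
        · intro x _ _; exact w_nonneg hp0.le hp1 x
    _ ≤ 2 * Real.exp (-(t ^ 2 * m) / (4 * p)) := chernoff n s hp0 hp1 ht htp m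

lemma tail_sum (ν₀ n : ℕ) {d : ℝ} (hd : 0 < d) :
    ∑ m ∈ Finset.Icc ν₀ n, Real.exp (-(d * m)) ≤
      Real.exp (-(d * ν₀)) / (1 - Real.exp (-d)) := by
  have hr0 : 0 < Real.exp (-d) := Real.exp_pos _
  have hr1 : Real.exp (-d) < 1 := by rw [Real.exp_lt_one_iff]; linarith
  have h1r : 0 < 1 - Real.exp (-d) := by linarith
  have hterm : ∀ m : ℕ, Real.exp (-(d * m)) = Real.exp (-d) ^ m := by
    intro m
    rw [← Real.exp_nat_mul]
    congr 1; ring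
  calc ∑ m ∈ Finset.Icc ν₀ n, Real.exp (-(d * m)) =
      ∑ m ∈ Finset.Ico ν₀ (n + 1), Real.exp (-d) ^ m := by
        rw [Finset.Ico_add_one_right_eq_Icc]
        exact Finset.sum_congr rfl fun m _ => hterm m
    _ = ∑ j ∈ Finset.range (n + 1 - ν₀), Real.exp (-d) ^ (ν₀ + j) :=
        Finset.sum_Ico_eq_sum_range _ _ _
    _ = Real.exp (-d) ^ ν₀ * ∑ j ∈ Finset.range (n + 1 - ν₀), Real.exp (-d) ^ j := by
        rw [Finset.mul_sum]
        exact Finset.sum_congr rfl fun j _ => pow_add _ _ _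
    _ ≤ Real.exp (-d) ^ ν₀ * (1 / (1 - Real.exp (-d))) := by
        apply mul_le_mul_of_nonneg_left _ (pow_nonneg hr0.le _)
        rw [geom_sum_eq hr1.ne (n + 1 - ν₀)]
        have hnum : (Real.exp (-d) ^ (n + 1 - ν₀) - 1) / (Real.exp (-d) - 1) =
            (1 - Real.exp (-d) ^ (n + 1 - ν₀)) / (1 - Real.exp (-d)) := by
          rw [← neg_div_neg_eq]; ring_nf
        rw [hnum]
        apply div_le_div₀ zero_le_one _ h1r le_rfl
        have : 0 ≤ Real.exp (-d) ^ (n + 1 - ν₀) := pow_nonneg hr0.le _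
        linarith
    _ = Real.exp (-(d * ν₀)) / (1 - Real.exp (-d)) := by
        rw [hterm ν₀]; ring

lemma M_eq {n : ℕ} (p : ℝ) (s : (i : Fin n) → (Fin (i : ℕ) → Bool) → Bool)
    (x : Fin n → Bool) :
    M p s x = ((∑ i, (Hb s x i && x i).toNat : ℕ) : ℝ) - p * ((hsum s x : ℕ) : ℝ) := by
  unfold M hsum
  push_cast
  rw [Finset.mul_sum, ← Finset.sum_sub_distrib]
  apply Finset.sum_congr rfl
  intro i _
  cases hb : Hb s x i <;> cases hx : x i <;> simp [hb, hx]

end CBaux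


open CBaux

set_option maxHeartbeats 1000000

/-- The modified Coins and Buckets game: `ν` coins are placed one at a time, coin `i`
landing in bucket `A` when `B i = true` (independently with probability `a/ν`); before
coin `i` is placed, Decider, who has seen the placements `B 1, …, B (i-1)` but not `B i`,
chooses via `s i` whether coin `i` is heads (`H i = true`). If `h` is the number of heads
and `h_A` the number of heads landing in bucket `A`, then for `a ≤ ν/2`, `ν₀ ≤ ν` and
`0 < t < a/ν`, `P[(h ≥ ν₀) ∧ |h_A - (a/ν)h| ≥ t h] ≤ (40/t²) exp(-ν₀ ν t²/(20a))`. -/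
theorem modified_coins_and_buckets {Ω : Type*} [MeasurableSpace Ω] (μ : Measure Ω)
    [IsProbabilityMeasure μ] (a ν ν₀ : ℕ) (ha : 0 < a) (hν₀pos : 0 < ν₀)
    (ha2 : 2 * a ≤ ν) (hν₀ : ν₀ ≤ ν)
    (B : Fin ν → Ω → Bool) (hmeas : ∀ i, Measurable (B i))
    (hindep : iIndepFun B μ)
    (hdist : ∀ i, μ.map (B i) = bernMeasure ((a : ENNReal) / ν))
    (s : (i : Fin ν) → (Fin (i : ℕ) → Bool) → Bool)
    (H : Fin ν → Ω → Bool)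
    (hH : ∀ (i : Fin ν) (ω : Ω), H i ω = s i (fun j => B ⟨j, j.isLt.trans i.isLt⟩ ω))
    (t : ℝ) (ht : 0 < t) (ht' : t < (a : ℝ) / ν) :
    μ {ω | ν₀ ≤ ∑ i, (H i ω).toNat ∧
        t * ((∑ i, (H i ω).toNat : ℕ) : ℝ) ≤
          |((∑ i, (H i ω && B i ω).toNat : ℕ) : ℝ) -
            (a : ℝ) / ν * ((∑ i, (H i ω).toNat : ℕ) : ℝ)|} ≤
      ENNReal.ofReal (40 / t ^ 2 * Real.exp (-((ν₀ : ℝ) * ν * t ^ 2) / (20 * a))) := by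
  classical
  have hν : 0 < ν := by omega
  have hνR : (0 : ℝ) < ν := by exact_mod_cast hν
  have haR : (0 : ℝ) < a := by exact_mod_cast ha
  have ha2R : 2 * (a : ℝ) ≤ ν := by exact_mod_cast ha2
  set p : ℝ := (a : ℝ) / ν with hpdef
  have hp0 : 0 < p := div_pos haR hνR
  have hphalf : p ≤ 1 / 2 := by
    rw [hpdef, div_le_iff₀ hνR]; linarith
  have hp1 : p ≤ 1 := by linarith
  have htp : t < p := ht'
  have ht1 : t ≤ 1 / 2 := by linarith
  clear_value p
  set T : Finset (Fin ν → Bool) := Finset.univ.filter (fun x : Fin ν → Bool =>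
    ν₀ ≤ hsum s x ∧ t * (hsum s x : ℝ) ≤ |M p s x|) with hT
  -- Step 1: event inclusion
  have hsub : {ω : Ω | ν₀ ≤ ∑ i, (H i ω).toNat ∧
      t * ((∑ i, (H i ω).toNat : ℕ) : ℝ) ≤
        |((∑ i, (H i ω && B i ω).toNat : ℕ) : ℝ) -
          p * ((∑ i, (H i ω).toNat : ℕ) : ℝ)|} ⊆
      ⋃ x ∈ T, ⋂ i, B i ⁻¹' {x i} := by
    intro ω hω
    simp only [Set.mem_setOf_eq] at hω
    have hHb : ∀ i, Hb s (fun k => B k ω) i = H i ω := by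
      intro i; rw [hH i ω]; rfl
    have hhs : hsum s (fun k => B k ω) = ∑ i, (H i ω).toNat := by
      unfold hsum
      exact Finset.sum_congr rfl fun i _ => by rw [hHb]
    have hMs : M p s (fun k => B k ω) =
        ((∑ i, (H i ω && B i ω).toNat : ℕ) : ℝ) -
          p * ((∑ i, (H i ω).toNat : ℕ) : ℝ) := by
      rw [M_eq, hhs]
      congr 2
      exact Finset.sum_congr rfl fun i _ => by rw [hHb]
    have hxT : (fun k => B k ω) ∈ T := by
      rw [hT, Finset.mem_filter]
      refine ⟨Finset.mem_univ _, ?_, ?_⟩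
      · rw [hhs]; exact hω.1
      · rw [hhs, hMs]; exact hω.2
    exact Set.mem_iUnion₂.2 ⟨fun k => B k ω, hxT, Set.mem_iInter.2 fun i => rfl⟩
  -- Step 2: product formula for each atom
  have hatom : ∀ x : Fin ν → Bool,
      μ (⋂ i, B i ⁻¹' {x i}) = ENNReal.ofReal (w p x) := by
    intro x
    have hfac : ∀ (i : Fin ν) (b : Bool),
        μ (B i ⁻¹' {b}) = ENNReal.ofReal (if b then p else 1 - p) := by
      intro i b
      have hmap : μ (B i ⁻¹' {b}) = (μ.map (B i)) {b} :=
        (Measure.map_apply (hmeas i) (measurableSet_singleton b)).symm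
      have hq : (a : ENNReal) / ν = ENNReal.ofReal p := by
        rw [hpdef, ENNReal.ofReal_div_of_pos hνR, ENNReal.ofReal_natCast,
          ENNReal.ofReal_natCast]
      rw [hmap, hdist i]
      cases b with
      | true =>
          simp only [if_true]
          rw [← hq]
          simp [bernMeasure, Measure.dirac_apply]
      | false =>
          simp only [Bool.false_eq_true, if_false]
          have h1mq : 1 - (a : ENNReal) / ν = ENNReal.ofReal (1 - p) := by
            rw [hq, ← ENNReal.ofReal_one, ← ENNReal.ofReal_sub 1 hp0.le]
          rw [← h1mq]
          simp [bernMeasure, Measure.dirac_apply]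
    calc μ (⋂ i, B i ⁻¹' {x i}) = ∏ i, μ (B i ⁻¹' {x i}) :=
          hindep.meas_iInter fun i => ⟨{x i}, measurableSet_singleton _, rfl⟩
      _ = ∏ i, ENNReal.ofReal (if x i then p else 1 - p) :=
          Finset.prod_congr rfl fun i _ => hfac i (x i)
      _ = ENNReal.ofReal (∏ i, (if x i then p else 1 - p)) :=
          (ENNReal.ofReal_prod_of_nonneg fun i _ => by split <;> linarith).symm
      _ = ENNReal.ofReal (w p x) := rfl
  -- Step 3: measure bound
  have hbound : μ {ω : Ω | ν₀ ≤ ∑ i, (H i ω).toNat ∧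
      t * ((∑ i, (H i ω).toNat : ℕ) : ℝ) ≤
        |((∑ i, (H i ω && B i ω).toNat : ℕ) : ℝ) -
          p * ((∑ i, (H i ω).toNat : ℕ) : ℝ)|} ≤
      ENNReal.ofReal (∑ x ∈ T, w p x) := by
    calc μ _ ≤ μ (⋃ x ∈ T, ⋂ i, B i ⁻¹' {x i}) := measure_mono hsub
      _ ≤ ∑ x ∈ T, μ (⋂ i, B i ⁻¹' {x i}) := measure_biUnion_finset_le T _
      _ = ∑ x ∈ T, ENNReal.ofReal (w p x) := Finset.sum_congr rfl fun x _ => hatom x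
      _ = ENNReal.ofReal (∑ x ∈ T, w p x) :=
          (ENNReal.ofReal_sum_of_nonneg fun x _ => w_nonneg hp0.le hp1 x).symm
  refine le_trans hbound (ENNReal.ofReal_le_ofReal ?_)
  -- Step 4: real-number estimates
  obtain ⟨d, hd⟩ : ∃ x : ℝ, x = t ^ 2 / (4 * p) := ⟨_, rfl⟩
  obtain ⟨E, hE⟩ : ∃ x : ℝ, x = ((ν₀ : ℝ) * ν * t ^ 2) / (20 * a) := ⟨_, rfl⟩
  have hgoalE : -((ν₀ : ℝ) * ν * t ^ 2) / (20 * a) = -E := by rw [hE]; ring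
  rw [hgoalE]
  have hd0 : 0 < d := by rw [hd]; positivity
  have hTsum : ∑ x ∈ T, w p x ≤
      ∑ m ∈ Finset.Icc ν₀ ν, 2 * Real.exp (-(t ^ 2 * m) / (4 * p)) := by
    rw [hT]
    exact main_sum ν ν₀ s hp0 hp1 ht htp
  have htail : ∑ m ∈ Finset.Icc ν₀ ν, 2 * Real.exp (-(t ^ 2 * m) / (4 * p)) ≤
      2 * (Real.exp (-(d * ν₀)) / (1 - Real.exp (-d))) := by
    have hexpo : ∀ m : ℕ, -(t ^ 2 * m) / (4 * p) = -(d * m) := by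
      intro m; rw [hd]; ring
    calc ∑ m ∈ Finset.Icc ν₀ ν, 2 * Real.exp (-(t ^ 2 * m) / (4 * p))
        = 2 * ∑ m ∈ Finset.Icc ν₀ ν, Real.exp (-(d * m)) := by
          rw [Finset.mul_sum]
          exact Finset.sum_congr rfl fun m _ => by rw [hexpo m]
      _ ≤ 2 * (Real.exp (-(d * ν₀)) / (1 - Real.exp (-d))) :=
          mul_le_mul_of_nonneg_left (tail_sum ν₀ ν hd0) (by norm_num)
  have hE0 : 0 ≤ E := by rw [hE]; positivity
  have hdE : d * ν₀ = 5 * E := by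
    rw [hd, hE, hpdef]
    field_simp
    ring
  have hexp1 : Real.exp (-(d * ν₀)) ≤ Real.exp (-E) :=
    Real.exp_le_exp.2 (by rw [hdE]; linarith)
  have hd2 : t ^ 2 / 2 ≤ d := by
    rw [hd, div_le_div_iff₀ (by norm_num) (by linarith)]
    nlinarith [sq_nonneg t]
  have hden : t ^ 2 / 20 ≤ 1 - Real.exp (-d) := by
    have hmono : Real.exp (-d) ≤ Real.exp (-(t ^ 2 / 2)) :=
      Real.exp_le_exp.2 (by linarith)
    have e1 : t ^ 2 / 2 + 1 ≤ Real.exp (t ^ 2 / 2) := Real.add_one_le_exp _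
    have e2 : -(t ^ 2 / 2) + 1 ≤ Real.exp (-(t ^ 2 / 2)) := Real.add_one_le_exp _
    have e3 : Real.exp (t ^ 2 / 2) * Real.exp (-(t ^ 2 / 2)) = 1 := by
      rw [← Real.exp_add]; simp
    have ht2 : t ^ 2 ≤ 1 / 4 := by nlinarith
    nlinarith [mul_le_mul_of_nonneg_right e1 (Real.exp_nonneg (-(t ^ 2 / 2)))]
  have hpos : 0 < 1 - Real.exp (-d) := lt_of_lt_of_le (by positivity) hden
  have hfin : 2 * (Real.exp (-(d * ν₀)) / (1 - Real.exp (-d))) ≤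
      40 / t ^ 2 * Real.exp (-E) := by
    rw [← mul_div_assoc, div_le_iff₀ hpos]
    have key : 40 / t ^ 2 * Real.exp (-E) * (t ^ 2 / 20) = 2 * Real.exp (-E) := by
      field_simp
      ring
    nlinarith [mul_le_mul_of_nonneg_left hden
        (show (0:ℝ) ≤ 40 / t ^ 2 * Real.exp (-E) by positivity),
      Real.exp_pos (-E)]
  linarith [hTsum, htail, hfin]
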